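/- arXiv:2604.09266 — 3 statements merged into one kernel-verified Lean document; each statement's English description precedes it below -/
import Mathlib

section
/- Let a be real with 0 < a ≤ (2 + √2)/4. Then for all real t, 1 + cos t + a·cos(2t) ≥ 0. -/
theorem boundary_re_nonneg (a : ℝ) (ha : 0 < a) (ha2 : a ≤ (2 + Real.sqrt 2) / 4) :
    ∀ t : ℝ, 0 ≤ 1 + Real.cos t + a * Real.cos (2 * t) := by
  intro t
  have hc2 : Real.cos (2 * t) = 2 * Real.cos t ^ 2 - 1 := Real.cos_two_mul t
  set c := Real.cos t with hc
  have h1 : -1 ≤ c := Real.neg_one_le_cos t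
  have h2 : c ≤ 1 := Real.cos_le_one t
  have hs : Real.sqrt 2 ^ 2 = 2 := Real.sq_sqrt (by norm_num)
  have hs0 : (0:ℝ) ≤ Real.sqrt 2 := Real.sqrt_nonneg 2
  rw [hc2]
  rcases le_or_gt a (1/4) with h | h
  · nlinarith [mul_nonneg ha.le (sq_nonneg (c+1)), mul_nonneg (by linarith : (0:ℝ) ≤ 1 - 4*a) (by linarith : (0:ℝ) ≤ c + 1)]
  · have key : 0 ≤ 8*a - 8*a^2 - 1 := by
      nlinarith [mul_nonneg (by nlinarith : (0:ℝ) ≤ 4*a - (2 - Real.sqrt 2)) (by nlinarith : (0:ℝ) ≤ (2 + Real.sqrt 2) - 4*a)]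
    nlinarith [sq_nonneg (4*a*c+1)]
end

section
/- Let a be real with a > (2 + √2)/4. Then there exists a real t such that 1 + cos t + a·cos(2t) < 0. -/
/-!
Writing `c = cos t`, the expression is the quadratic `2 a c² + c + 1 - a`, whose minimum
`1 - a - 1 / (8 a)` is attained at `c = -1 / (4 a)`; this lies in `[-1, 1]` once `a ≥ 1/4`.
The minimum is negative exactly when `8 a² - 8 a + 1 > 0`, i.e. outside the roots `(2 ± √2) / 4`.
-/

open Real

lemma one_add_cos_add_mul_cos_two_mul_eq {a : ℝ} (ha : a ≠ 0) (t : ℝ) :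
    1 + cos t + a * cos (2 * t) = 2 * a * (cos t + 1 / (4 * a)) ^ 2 + (1 - a - 1 / (8 * a)) := by
  rw [cos_two_mul]
  field_simp
  ring

lemma one_sub_sub_one_div_eight_mul_neg {a : ℝ} (ha : (2 + √2) / 4 < a) :
    1 - a - 1 / (8 * a) < 0 := by
  have hsqrt : √2 ^ 2 = 2 := sq_sqrt zero_le_two
  have hsqrt_pos : 0 < √2 := by positivity
  have ha0 : 0 < a := by linarith
  have hfactor : 8 * a ^ 2 - 8 * a + 1 = (4 * a - 2 - √2) * (4 * a - 2 + √2) / 2 := by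
    ring_nf; rw [hsqrt]; ring
  have hquad : 0 < 8 * a ^ 2 - 8 * a + 1 := by
    rw [hfactor]
    apply div_pos (mul_pos _ _) two_pos <;> linarith
  rw [show 1 - a - 1 / (8 * a) = -(8 * a ^ 2 - 8 * a + 1) / (8 * a) by field_simp; ring]
  exact div_neg_of_neg_of_pos (neg_neg_of_pos hquad) (by positivity)

theorem boundary_re_neg (a : ℝ) (ha : (2 + Real.sqrt 2) / 4 < a) :
    ∃ t : ℝ, 1 + Real.cos t + a * Real.cos (2 * t) < 0 := by
  have hquarter : 1 / 4 < a := by linarith [sqrt_nonneg 2]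
  have ha0 : 0 < a := by linarith
  have hcos : cos (arccos (-1 / (4 * a))) = -1 / (4 * a) := by
    apply cos_arccos
    · rw [le_div_iff₀ (by positivity)]; linarith
    · rw [div_le_one (by positivity)]; linarith
  refine ⟨arccos (-1 / (4 * a)), ?_⟩
  rw [one_add_cos_add_mul_cos_two_mul_eq ha0.ne', hcos, neg_div, neg_add_cancel]
  simpa using one_sub_sub_one_div_eight_mul_neg ha
end

section
/- Let a > 0 and φ(z) = 1 + z + a z². If 0 < a ≤ (2 + √2)/4, then Re φ(z) > 0 for every z in the open unit disk 𝔻. -/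
/-!
Write z = x + iy. Then Re φ(z) = 1 + x + a(x² - y²), and on the disc y² < 1 - x², so for a > 0
Re φ(z) > 2a x² + x + 1 - a =: q(x). It remains to see q ≥ 0 on [-1, 1]. For a ≤ 1/4 the vertex
of q lies left of -1 and q(-1) = a > 0. For a ≥ 1/4 the discriminant 8a² - 8a + 1 of q vanishes at
a = (2 ± √2)/4, so it is nonpositive throughout [1/4, (2 + √2)/4] and q ≥ 0 on all of ℝ.
-/

open Real

lemma Complex.re_one_add_add_mul_sq (a : ℝ) (z : ℂ) :
    (1 + z + (a : ℂ) * z ^ 2).re = 1 + z.re + a * (z.re ^ 2 - z.im ^ 2) := by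
  simp [pow_two]

lemma Complex.re_sq_add_im_sq_lt_one {z : ℂ} (hz : z ∈ Metric.ball (0 : ℂ) 1) :
    z.re ^ 2 + z.im ^ 2 < 1 := by
  have hnorm : ‖z‖ < 1 := mem_ball_zero_iff.mp hz
  have hsq : ‖z‖ ^ 2 = z.re ^ 2 + z.im ^ 2 := by
    rw [Complex.sq_norm, Complex.normSq_apply]; ring
  nlinarith [norm_nonneg z]

lemma eight_mul_sq_sub_eight_mul_add_one_nonpos {a : ℝ} (h₁ : (2 - √2) / 4 ≤ a)
    (h₂ : a ≤ (2 + √2) / 4) : 8 * a ^ 2 - 8 * a + 1 ≤ 0 := by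
  have hroots : 8 * a ^ 2 - 8 * a + 1 = 8 * (a - (2 + √2) / 4) * (a - (2 - √2) / 4) := by
    ring_nf; rw [sq_sqrt zero_le_two]; ring
  rw [hroots]
  exact mul_nonpos_of_nonpos_of_nonneg
    (mul_nonpos_of_nonneg_of_nonpos (by norm_num) (by linarith)) (by linarith)

lemma quadratic_nonneg_of_discrim_nonpos {a : ℝ} (ha : 0 < a) (hd : 8 * a ^ 2 - 8 * a + 1 ≤ 0)
    (x : ℝ) : 0 ≤ 2 * a * x ^ 2 + x + 1 - a := by
  have hsquare : 8 * a * (2 * a * x ^ 2 + x + 1 - a) =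
      (4 * a * x + 1) ^ 2 - (8 * a ^ 2 - 8 * a + 1) := by
    ring
  have hscaled : 0 ≤ 8 * a * (2 * a * x ^ 2 + x + 1 - a) := by
    rw [hsquare]; nlinarith [sq_nonneg (4 * a * x + 1)]
  exact (mul_nonneg_iff_of_pos_left (by positivity)).mp hscaled

lemma quadratic_pos_of_le_quarter {a x : ℝ} (ha : 0 < a) (ha' : a ≤ 1 / 4) (hx : |x| ≤ 1) :
    0 < 2 * a * x ^ 2 + x + 1 - a := by
  obtain ⟨hx₁, hx₂⟩ := abs_le.mp hx
  have hfactor : 2 * a * x ^ 2 + x + 1 - a = (x + 1) * (2 * a * (x - 1) + 1) + a := by ring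
  have hslope : 0 ≤ 2 * a * (x - 1) + 1 := by nlinarith
  rw [hfactor]
  nlinarith [mul_nonneg (by linarith : 0 ≤ x + 1) hslope]

lemma quadratic_nonneg {a x : ℝ} (ha : 0 < a) (ha' : a ≤ (2 + √2) / 4) (hx : |x| ≤ 1) :
    0 ≤ 2 * a * x ^ 2 + x + 1 - a := by
  rcases le_or_gt a (1 / 4) with hsmall | hlarge
  · exact (quadratic_pos_of_le_quarter ha hsmall hx).le
  · have hsqrt : 1 ≤ √2 := one_le_sqrt.mpr one_le_two
    exact quadratic_nonneg_of_discrim_nonpos ha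
      (eight_mul_sq_sub_eight_mul_add_one_nonpos (by linarith) ha') x

theorem re_phi_pos (a : ℝ) (ha : 0 < a) (ha2 : a ≤ (2 + Real.sqrt 2) / 4) :
    ∀ z ∈ Metric.ball (0 : ℂ) 1, 0 < ((1 + z + (a : ℂ) * z ^ 2).re) := by
  intro z hz
  have hdisc := Complex.re_sq_add_im_sq_lt_one hz
  have hre : |z.re| ≤ 1 := by
    rw [abs_le]; constructor <;> nlinarith [sq_nonneg z.im]
  have hq := quadratic_nonneg ha ha2 hre
  have him : a * z.im ^ 2 < a * (1 - z.re ^ 2) := mul_lt_mul_of_pos_left (by linarith) ha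
  rw [Complex.re_one_add_add_mul_sq]
  linarith
end
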